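/- Let G be a 3-uniform hypergraph with λ(G) > λ(K_{k+1}^3) and let x be an optimum weight vector on G. Then for any vertex v of G, its weight x_v satisfies x_v < 1 - √(k(k-1))/(k+1). -/

import Mathlib

open Finset

/-- A (finite) hypergraph with vertex set `verts ⊆ ℕ` and edge set `edges`. -/
structure NatHypergraph where
  verts : Finset ℕ
  edges : Finset (Finset ℕ)

/-- Well-formedness: every edge is a subset of the vertex set. -/
def NatHypergraph.IsWf (G : NatHypergraph) : Prop := ∀ e ∈ G.edges, e ⊆ G.verts

/-- `G` is `r`-uniform: every edge has `r` vertices. -/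
def NatHypergraph.IsUniform (G : NatHypergraph) (r : ℕ) : Prop := ∀ e ∈ G.edges, e.card = r

/-- The Lagrangian polynomial `λ(G, x) = ∑_{e ∈ E(G)} ∏_{i ∈ e} x_i`. -/
noncomputable def lagPoly (G : NatHypergraph) (x : ℕ → ℝ) : ℝ := ∑ e ∈ G.edges, ∏ i ∈ e, x i

/-- Feasible weight vectors: the standard simplex on the vertex set of `G`. -/
def simplex (G : NatHypergraph) : Set (ℕ → ℝ) :=
  {x | (∀ i, 0 ≤ x i ∧ x i ≤ 1) ∧ ∑ i ∈ G.verts, x i = 1}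

/-- The Lagrangian `λ(G)`: the supremum of `λ(G, x)` over the simplex. -/
noncomputable def lag (G : NatHypergraph) : ℝ := sSup (lagPoly G '' simplex G)

/-- The complete 3-graph `K_m³` on `m` vertices. -/
def completeG (m : ℕ) : NatHypergraph :=
  ⟨Finset.range m, (Finset.range m).powersetCard 3⟩

/-!
Moving weight onto `v` while rescaling the other weights proportionally stays inside the simplex,
so the cubic `t ↦ λ(G, x_t)` along this curve is maximised at `t = x_v`; its vanishing derivative
is the Lagrange condition `λ(G_v, x) = 3 λ(G)`. The link `G_v` is a graph on the other vertices,
whose total weight is `1 - x_v`, so `λ(G_v, x) ≤ (1 - x_v)² / 2`. Hence `6 λ(G) ≤ (1 - x_v)²`,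
while the uniform weighting of `K_{k+1}³` gives `λ(G) > λ(K_{k+1}³) ≥ k(k-1) / (6(k+1)²)`.
-/

namespace NatHypergraph

def link (G : NatHypergraph) (v : ℕ) : NatHypergraph :=
  ⟨G.verts.erase v, (G.edges.filter (v ∈ ·)).image (·.erase v)⟩

def deleteVert (G : NatHypergraph) (v : ℕ) : NatHypergraph :=
  ⟨G.verts.erase v, G.edges.filter (v ∉ ·)⟩

variable {G : NatHypergraph} {r : ℕ}

lemma IsWf.link (hG : G.IsWf) (v : ℕ) : (G.link v).IsWf := by
  intro _ he
  obtain ⟨e, heG, rfl⟩ := mem_image.1 he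
  exact erase_subset_erase v (hG e (mem_filter.1 heG).1)

lemma IsUniform.link (hG : G.IsUniform (r + 1)) (v : ℕ) : (G.link v).IsUniform r := by
  intro _ he
  obtain ⟨e, heG, rfl⟩ := mem_image.1 he
  obtain ⟨he, hve⟩ := mem_filter.1 heG
  rw [card_erase_of_mem hve, hG e he, Nat.add_sub_cancel]

lemma IsWf.deleteVert (hG : G.IsWf) (v : ℕ) : (G.deleteVert v).IsWf := by
  intro e he
  obtain ⟨he, hve⟩ := mem_filter.1 he
  exact subset_erase.2 ⟨hG e he, hve⟩

lemma IsUniform.deleteVert (hG : G.IsUniform r) (v : ℕ) : (G.deleteVert v).IsUniform r :=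
  fun e he => hG e (mem_filter.1 he).1

lemma completeG_isWf (m : ℕ) : (completeG m).IsWf :=
  fun _ he => (mem_powersetCard.1 he).1

lemma completeG_isUniform (m : ℕ) : (completeG m).IsUniform 3 :=
  fun _ he => (mem_powersetCard.1 he).2

end NatHypergraph

open NatHypergraph

lemma two_mul_sum_powersetCard_two_prod {α R : Type*} [DecidableEq α] [CommRing R]
    (s : Finset α) (z : α → R) :
    2 * ∑ p ∈ s.powersetCard 2, ∏ i ∈ p, z i = (∑ i ∈ s, z i) ^ 2 - ∑ i ∈ s, z i ^ 2 := by
  induction s using Finset.induction_on with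
  | empty => simp [powersetCard_eq_empty.2 (by simp : (∅ : Finset α).card < 2)]
  | @insert a s ha ih =>
    have hdisj : Disjoint (s.powersetCard 2) ((s.powersetCard 1).image (insert a)) := by
      simp only [disjoint_right, mem_image, mem_powersetCard]
      rintro _ ⟨q, -, rfl⟩ ⟨hsub, -⟩
      exact ha (hsub (mem_insert_self a q))
    have hnew : ∑ p ∈ (s.powersetCard 1).image (insert a), ∏ i ∈ p, z i = z a * ∑ i ∈ s, z i := by
      rw [powersetCard_one, map_eq_image, image_image, sum_image fun i hi j _ hij => ?_, mul_sum]
      · refine sum_congr rfl fun i hi => prod_pair ?_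
        rintro rfl
        exact ha hi
      · have hi' : i ∈ ({a, j} : Finset α) := by simpa using congrArg (i ∈ ·) hij
        rcases mem_insert.1 hi' with rfl | hij
        · exact absurd hi ha
        · exact mem_singleton.1 hij
    rw [powersetCard_succ_insert ha, sum_union hdisj, hnew, sum_insert ha, sum_insert ha]
    linear_combination ih

lemma lagPoly_eq_mul_link_add_deleteVert (G : NatHypergraph) (v : ℕ) (z : ℕ → ℝ) :
    lagPoly G z = z v * lagPoly (G.link v) z + lagPoly (G.deleteVert v) z := by
  have hinj : Set.InjOn (·.erase v) (G.edges.filter (v ∈ ·) : Set (Finset ℕ)) := by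
    intro e he e' he' h
    rw [← insert_erase (mem_filter.1 he).2, ← insert_erase (mem_filter.1 he').2]
    exact congrArg (insert v) h
  rw [lagPoly, lagPoly, lagPoly, NatHypergraph.link, NatHypergraph.deleteVert, sum_image hinj,
    mul_sum, ← sum_filter_add_sum_filter_not G.edges (v ∈ ·)]
  congr 1
  exact sum_congr rfl fun e he => (mul_prod_erase e z (mem_filter.1 he).2).symm

lemma lagPoly_congr {H : NatHypergraph} (hH : H.IsWf) {z w : ℕ → ℝ}
    (h : ∀ i ∈ H.verts, z i = w i) : lagPoly H z = lagPoly H w :=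
  sum_congr rfl fun e he => prod_congr rfl fun i hi => h i (hH e he hi)

lemma lagPoly_smul {H : NatHypergraph} {r : ℕ} (hH : H.IsUniform r) (c : ℝ) (z : ℕ → ℝ) :
    lagPoly H (c • z) = c ^ r * lagPoly H z := by
  rw [lagPoly, lagPoly, mul_sum]
  refine sum_congr rfl fun e he => ?_
  simp only [Pi.smul_apply, smul_eq_mul, prod_mul_distrib, prod_const, hH e he]

lemma lagPoly_eq_zero {H : NatHypergraph} {r : ℕ} (hH : H.IsWf) (hu : H.IsUniform r) (hr : r ≠ 0)
    {z : ℕ → ℝ} (hz : ∀ i ∈ H.verts, z i = 0) : lagPoly H z = 0 := by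
  rw [lagPoly_congr hH (w := (0 : ℝ) • z) (by simpa using hz), lagPoly_smul hu, zero_pow hr,
    zero_mul]

lemma lagPoly_le_sq_div_two {H : NatHypergraph} (hH : H.IsWf) (hu : H.IsUniform 2)
    {z : ℕ → ℝ} (hz : ∀ i ∈ H.verts, 0 ≤ z i) :
    lagPoly H z ≤ (∑ i ∈ H.verts, z i) ^ 2 / 2 := by
  have hsub : H.edges ⊆ H.verts.powersetCard 2 :=
    fun e he => mem_powersetCard.2 ⟨hH e he, hu e he⟩
  have hpairs := two_mul_sum_powersetCard_two_prod H.verts z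
  have hsq : 0 ≤ ∑ i ∈ H.verts, z i ^ 2 := sum_nonneg fun i _ => sq_nonneg (z i)
  calc lagPoly H z ≤ ∑ p ∈ H.verts.powersetCard 2, ∏ i ∈ p, z i :=
        sum_le_sum_of_subset_of_nonneg hsub fun p hp _ =>
          prod_nonneg fun i hi => hz i ((mem_powersetCard.1 hp).1 hi)
    _ ≤ _ := by linarith

lemma bddAbove_lagPoly_image (G : NatHypergraph) : BddAbove (lagPoly G '' simplex G) := by
  refine ⟨#G.edges, ?_⟩
  rintro _ ⟨y, hy, rfl⟩
  calc lagPoly G y ≤ ∑ _e ∈ G.edges, (1 : ℝ) :=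
        sum_le_sum fun e _ => prod_le_one (fun i _ => (hy.1 i).1) fun i _ => (hy.1 i).2
    _ = #G.edges := by simp

lemma lagPoly_le_lag {G : NatHypergraph} {y : ℕ → ℝ} (hy : y ∈ simplex G) :
    lagPoly G y ≤ lag G :=
  le_csSup (bddAbove_lagPoly_image G) ⟨y, hy, rfl⟩

lemma sum_erase_of_mem_simplex {G : NatHypergraph} {x : ℕ → ℝ} (hx : x ∈ simplex G) {v : ℕ}
    (hv : v ∈ G.verts) : ∑ i ∈ G.verts.erase v, x i = 1 - x v := by
  rw [← hx.2, ← add_sum_erase G.verts x hv, add_sub_cancel_left]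

lemma card_edges_div_le_lag {G : NatHypergraph} {r : ℕ} (hG : G.IsWf) (hu : G.IsUniform r)
    (hne : G.verts.Nonempty) : (#G.edges : ℝ) / (#G.verts : ℝ) ^ r ≤ lag G := by
  set n : ℝ := (#G.verts : ℝ)
  have hn : 1 ≤ n := Nat.one_le_cast.2 hne.card_pos
  let u : ℕ → ℝ := fun i => if i ∈ G.verts then n⁻¹ else 0
  have hu_mem : u ∈ simplex G := by
    refine ⟨fun i => ?_, ?_⟩
    · by_cases hi : i ∈ G.verts
      · simp only [u, if_pos hi]
        exact ⟨by positivity, inv_le_one_of_one_le₀ hn⟩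
      · simp [u, hi]
    · rw [sum_congr rfl fun i hi => if_pos hi, sum_const, nsmul_eq_mul]
      exact mul_inv_cancel₀ (by positivity)
  have hval : lagPoly G u = #G.edges / n ^ r := by
    rw [lagPoly_congr hG (w := fun _ => n⁻¹) fun i hi => if_pos hi, lagPoly,
      sum_congr rfl fun e he => by rw [prod_const, hu e he], sum_const, nsmul_eq_mul, inv_pow,
      div_eq_mul_inv]
  exact hval ▸ lagPoly_le_lag hu_mem

lemma le_lag_completeG_succ (k : ℕ) :
    (k : ℝ) * (k - 1) / (6 * (k + 1) ^ 2) ≤ lag (completeG (k + 1)) := by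
  have h := card_edges_div_le_lag (completeG_isWf (k + 1)) (completeG_isUniform (k + 1))
    ⟨0, mem_range.2 k.succ_pos⟩
  have hchoose : ((k + 1).choose 3 : ℝ) * 3 = (k + 1) * (k * (k - 1) / 2) := by
    rw [← Nat.cast_choose_two]
    exact_mod_cast (Nat.add_one_mul_choose_eq k 2).symm
  convert h using 1
  simp only [completeG, card_powersetCard, card_range]
  push_cast
  field_simp
  linear_combination (-2) * hchoose

noncomputable def shiftWeight (G : NatHypergraph) (x : ℕ → ℝ) (v : ℕ) (t : ℝ) : ℕ → ℝ :=
  Function.update (fun i => if i ∈ G.verts then (1 - t) / (1 - x v) * x i else 0) v t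

lemma shiftWeight_self (G : NatHypergraph) (x : ℕ → ℝ) (v : ℕ) (t : ℝ) :
    shiftWeight G x v t v = t :=
  Function.update_self ..

lemma shiftWeight_of_mem_erase {G : NatHypergraph} (x : ℕ → ℝ) {v i : ℕ} (t : ℝ)
    (hi : i ∈ G.verts.erase v) : shiftWeight G x v t i = (1 - t) / (1 - x v) * x i := by
  obtain ⟨hiv, hi⟩ := mem_erase.1 hi
  simp [shiftWeight, hiv, hi]

lemma shiftWeight_mem_simplex {G : NatHypergraph} {x : ℕ → ℝ} (hx : x ∈ simplex G) {v : ℕ}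
    (hv : v ∈ G.verts) (hv1 : x v < 1) {t : ℝ} (ht : t ∈ Set.Icc (0 : ℝ) 1) :
    shiftWeight G x v t ∈ simplex G := by
  have hrest := sum_erase_of_mem_simplex hx hv
  have hc : 0 ≤ (1 - t) / (1 - x v) := div_nonneg (by linarith [ht.2]) (by linarith)
  refine ⟨fun i => ?_, ?_⟩
  · by_cases hiv : i = v
    · rw [hiv, shiftWeight_self]
      exact ht
    by_cases hi : i ∈ G.verts
    · have hi' : i ∈ G.verts.erase v := mem_erase.2 ⟨hiv, hi⟩
      have hxi : x i ≤ 1 - x v := hrest ▸ single_le_sum (fun j _ => (hx.1 j).1) hi'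
      have : (1 - t) / (1 - x v) * x i ≤ 1 - t :=
        (mul_le_mul_of_nonneg_left hxi hc).trans_eq (div_mul_cancel₀ _ (by linarith))
      rw [shiftWeight_of_mem_erase x t hi']
      exact ⟨mul_nonneg hc (hx.1 i).1, by linarith [ht.1]⟩
    · simp [shiftWeight, hiv, hi]
  · rw [← add_sum_erase _ _ hv, sum_congr rfl fun i hi => shiftWeight_of_mem_erase x t hi,
      ← mul_sum, hrest, div_mul_cancel₀ _ (by linarith), shiftWeight_self]
    ring

lemma lagPoly_shiftWeight {G : NatHypergraph} (hG : G.IsWf) (hu : G.IsUniform 3)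
    (x : ℕ → ℝ) (v : ℕ) (t : ℝ) :
    lagPoly G (shiftWeight G x v t) = t * ((1 - t) / (1 - x v)) ^ 2 * lagPoly (G.link v) x
      + ((1 - t) / (1 - x v)) ^ 3 * lagPoly (G.deleteVert v) x := by
  have hrest (i : ℕ) (hi : i ∈ G.verts.erase v) :
      shiftWeight G x v t i = (((1 - t) / (1 - x v)) • x) i :=
    shiftWeight_of_mem_erase x t hi
  rw [lagPoly_eq_mul_link_add_deleteVert G v, lagPoly_congr (hG.link v) hrest,
    lagPoly_congr (hG.deleteVert v) hrest, lagPoly_smul (hu.link v), lagPoly_smul (hu.deleteVert v),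
    shiftWeight_self, mul_assoc]

lemma one_sub_three_mul_mul_eq_of_isLocalMax {a P Q : ℝ} (ha : a < 1)
    (h : IsLocalMax (fun t => t * ((1 - t) / (1 - a)) ^ 2 * P + ((1 - t) / (1 - a)) ^ 3 * Q) a) :
    (1 - 3 * a) * P = 3 * Q := by
  have hc : HasDerivAt (fun t => (1 - t) / (1 - a)) (-1 / (1 - a)) a :=
    ((hasDerivAt_id' a).const_sub 1).div_const (1 - a)
  have hf := (((hasDerivAt_id' a).mul (hc.pow 2)).mul_const P).add ((hc.pow 3).mul_const Q)
  have h0 := h.hasDerivAt_eq_zero hf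
  have ha' : 1 - a ≠ 0 := by linarith
  simp only [Pi.pow_apply, div_self ha'] at h0
  field_simp at h0
  linear_combination h0

lemma lagPoly_link_eq_three_mul {G : NatHypergraph} (hG : G.IsWf) (hu : G.IsUniform 3)
    {x : ℕ → ℝ} (hx : x ∈ simplex G) (hopt : lagPoly G x = lag G) {v : ℕ} (hv : v ∈ G.verts)
    (hv0 : 0 < x v) (hv1 : x v < 1) :
    lagPoly (G.link v) x = 3 * lagPoly G x := by
  have hsplit := lagPoly_eq_mul_link_add_deleteVert G v x
  have hmax : IsLocalMax (fun t => t * ((1 - t) / (1 - x v)) ^ 2 * lagPoly (G.link v) x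
      + ((1 - t) / (1 - x v)) ^ 3 * lagPoly (G.deleteVert v) x) (x v) := by
    filter_upwards [Icc_mem_nhds hv0 hv1] with t ht
    have hself : (1 - x v) / (1 - x v) = 1 := div_self (by linarith)
    rw [← lagPoly_shiftWeight hG hu, hself, one_pow, one_pow, one_mul, mul_one, ← hsplit, hopt]
    exact lagPoly_le_lag (shiftWeight_mem_simplex hx hv hv1 ht)
  linear_combination one_sub_three_mul_mul_eq_of_isLocalMax hv1 hmax - 3 * hsplit

lemma six_mul_lagPoly_le_sq {G : NatHypergraph} (hG : G.IsWf) (hu : G.IsUniform 3)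
    {x : ℕ → ℝ} (hx : x ∈ simplex G) (hopt : lagPoly G x = lag G) {v : ℕ} (hv : v ∈ G.verts)
    (hv0 : 0 < x v) : 6 * lagPoly G x ≤ (1 - x v) ^ 2 := by
  have hrest := sum_erase_of_mem_simplex hx hv
  have hlink : lagPoly (G.link v) x ≤ (1 - x v) ^ 2 / 2 :=
    hrest ▸ lagPoly_le_sq_div_two (hG.link v) (hu.link v) fun i _ => (hx.1 i).1
  rcases (hx.1 v).2.lt_or_eq with hv1 | hv1
  · linarith [lagPoly_link_eq_three_mul hG hu hx hopt hv hv0 hv1]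
  · have hzero : ∀ i ∈ G.verts.erase v, x i = 0 :=
      (sum_eq_zero_iff_of_nonneg fun i _ => (hx.1 i).1).1 (by rw [hrest, hv1, sub_self])
    have hdel := lagPoly_eq_zero (hG.deleteVert v) (hu.deleteVert v) three_ne_zero hzero
    rw [hv1, sub_self] at hlink
    rw [lagPoly_eq_mul_link_add_deleteVert G v, hdel, hv1]
    linarith

/-- If `G` is a 3-graph with `λ(G) > λ(K_{k+1}³)` and `x` is an optimum weight
vector, then every vertex `v` has weight `x v < 1 − √(k(k−1))/(k+1)`. -/
theorem stmt_6 (k : ℕ) (G : NatHypergraph) (hwf : G.IsWf) (hu : G.IsUniform 3)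
    (hlag : lag (completeG (k + 1)) < lag G)
    (x : ℕ → ℝ) (hx : x ∈ simplex G) (hopt : lagPoly G x = lag G) :
    ∀ v ∈ G.verts, x v < 1 - Real.sqrt ((k : ℝ) * ((k : ℝ) - 1)) / ((k : ℝ) + 1) := by
  intro v hv
  have hk : (0 : ℝ) ≤ k * (k - 1) := by
    rcases k with _ | k
    · simp
    · push_cast; nlinarith
  have hlam : (k : ℝ) * (k - 1) / (6 * (k + 1) ^ 2) < lagPoly G x :=
    hopt ▸ (le_lag_completeG_succ k).trans_lt hlag
  have hsq : (Real.sqrt (k * (k - 1)) / (k + 1)) ^ 2 = k * (k - 1) / (k + 1) ^ 2 := by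
    rw [div_pow, Real.sq_sqrt hk]
  rw [lt_sub_comm]
  refine lt_of_pow_lt_pow_left₀ 2 (by linarith [(hx.1 v).2]) ?_
  rw [hsq]
  rcases (hx.1 v).1.eq_or_lt with hv0 | hv0
  · rw [← hv0, sub_zero, one_pow, div_lt_one (by positivity)]
    nlinarith
  · calc (k : ℝ) * (k - 1) / (k + 1) ^ 2 = 6 * ((k : ℝ) * (k - 1) / (6 * (k + 1) ^ 2)) := by
          field_simp
      _ < 6 * lagPoly G x := by linarith
      _ ≤ (1 - x v) ^ 2 := six_mul_lagPoly_le_sq hwf hu hx hopt hv hv0
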